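/- If S is a finite saturated set of reflections in GL(V) (V a finite-dimensional vector space over a number field k stable under complex conjugation), then the group generated by S is finite. -/

import Mathlib

/-- A reflection: a finite-order linear automorphism whose fixed space is a
hyperplane, i.e. whose "moved" space `im (s - 1)` is a line. -/
def IsReflection {k V : Type*} [Field k] [AddCommGroup V] [Module k V]
    (s : V ≃ₗ[k] V) : Prop :=
  IsOfFinOrder s ∧
    Module.finrank k (LinearMap.range ((s : V →ₗ[k] V) - LinearMap.id)) = 1

/-!
Let `G = ⟨S⟩`. Conjugation permutes the finite set `S`, and an element acting trivially
centralizes `S`, hence all of `G`; so the center of `G` has finite index. Commutators only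
depend on cosets of the center, so there are finitely many of them, and by Schur's theorem the
commutator subgroup is finite. The abelianization is generated by the finitely many images of
`S`, which have finite order, so it is finite as well; hence so is `G`.
-/

section

open Subgroup
open scoped commutatorElement

variable {G : Type*} [Group G]

theorem commutatorElement_mul_mem_center {z w : G} (hz : z ∈ center G) (hw : w ∈ center G)
    (a b : G) : ⁅a * z, b * w⁆ = ⁅a, b⁆ := by
  rw [mem_center_iff] at hz hw
  simp only [commutatorElement_def, mul_inv_rev]
  calc a * z * (b * w) * (z⁻¹ * a⁻¹) * (w⁻¹ * b⁻¹)
      = a * (b * w * z) * z⁻¹ * a⁻¹ * w⁻¹ * b⁻¹ := by rw [hz (b * w)]; group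
    _ = a * b * (a⁻¹ * w) * w⁻¹ * b⁻¹ := by rw [hw a⁻¹]; group
    _ = a * b * a⁻¹ * b⁻¹ := by group

instance finite_commutatorSet_of_finiteIndex_center [(center G).FiniteIndex] :
    Finite (commutatorSet G) := by
  refine Set.Finite.to_subtype <| (Set.finite_range
    fun p : (G ⧸ center G) × (G ⧸ center G) ↦ ⁅p.1.out, p.2.out⁆).subset ?_
  rintro _ ⟨a, b, rfl⟩
  obtain ⟨z, hz⟩ := QuotientGroup.mk_out_eq_mul (center G) a
  obtain ⟨w, hw⟩ := QuotientGroup.mk_out_eq_mul (center G) b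
  exact ⟨(a, b), by simp only [hz, hw, commutatorElement_mul_mem_center z.2 w.2]⟩

theorem Subgroup.finiteIndex_centralizer_of_conj_mem {S : Set G} (hS : S.Finite)
    (hconj : ∀ g : G, ∀ s ∈ S, g * s * g⁻¹ ∈ S) : (centralizer S).FiniteIndex := by
  have : Finite S := hS.to_subtype
  rw [centralizer_eq_iInf, iInf_subtype']
  refine finiteIndex_iInf fun ⟨s, hs⟩ ↦ ?_
  have horbit : MulAction.orbit (ConjAct G) s ⊆ S := by
    rintro _ ⟨g, rfl⟩
    exact hconj (ConjAct.ofConjAct g) s hs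
  have : Finite (MulAction.orbit (ConjAct G) s) := (hS.subset horbit).to_subtype
  have : Finite (G ⧸ centralizer {s}) := .of_equiv _
    ((MulAction.orbitEquivQuotientStabilizer (ConjAct G) s).trans
      (quotientEquivOfEq (ConjAct.stabilizer_eq_centralizer s)))
  exact finiteIndex_of_finite_quotient

theorem CommGroup.isMulTorsion_of_closure_eq_top {A : Type*} [CommGroup A] {S : Set A}
    (hgen : closure S = ⊤) (htor : ∀ s ∈ S, IsOfFinOrder s) : IsMulTorsion A :=
  CommGroup.torsion_eq_top_iff.mp <| top_le_iff.mp <| hgen ▸ (closure_le _).mpr htor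

theorem Group.finite_of_closure_eq_top_of_conj_mem {S : Set G} (hS : S.Finite)
    (hgen : closure S = ⊤) (htor : ∀ s ∈ S, IsOfFinOrder s)
    (hconj : ∀ g : G, ∀ s ∈ S, g * s * g⁻¹ ∈ S) : Finite G := by
  have : (center G).FiniteIndex := by
    rw [← centralizer_univ, ← coe_top, ← hgen, centralizer_closure]
    exact finiteIndex_centralizer_of_conj_mem hS hconj
  have : Group.FG G := Group.fg_iff.mpr ⟨S, hgen, hS⟩
  have : Group.FG (Abelianization G) := QuotientGroup.fg _
  have hgen' : closure (Abelianization.of '' S) = ⊤ := by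
    rw [← MonoidHom.map_closure, hgen, ← MonoidHom.range_eq_map, MonoidHom.range_eq_top]
    exact QuotientGroup.mk_surjective
  have : Finite (Abelianization G) := CommGroup.finite_of_fg_isMulTorsion _ <|
    CommGroup.isMulTorsion_of_closure_eq_top hgen' fun _ ⟨s, hs, hs'⟩ ↦
      hs' ▸ Abelianization.of.isOfFinOrder (htor s hs)
  have : (commutator G).FiniteIndex := finiteIndex_iff_finite_quotient.mpr this
  exact (finite_iff_finite_and_finiteIndex (commutator G)).mpr ⟨inferInstance, inferInstance⟩

theorem Subgroup.finite_closure_of_conj_mem {S : Set G} (hS : S.Finite)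
    (htor : ∀ s ∈ S, IsOfFinOrder s) (hconj : ∀ g ∈ closure S, ∀ s ∈ S, g * s * g⁻¹ ∈ S) :
    Finite (closure S) :=
  Group.finite_of_closure_eq_top_of_conj_mem (hS.preimage (closure S).subtype_injective.injOn)
    (closure_preimage_eq_top S) (fun s hs ↦ Submonoid.isOfFinOrder_coe.mp (htor s hs))
    fun g s hs ↦ hconj g g.2 s hs

end

theorem stmt_11_general {k V : Type*} [Field k] [AddCommGroup V] [Module k V]
    (S : Set (V ≃ₗ[k] V)) (hSfin : S.Finite) (hrefl : ∀ s ∈ S, IsReflection s)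
    (hsat : ∀ g ∈ Subgroup.closure S, ∀ s ∈ S, g * s * g⁻¹ ∈ S) :
    Finite (Subgroup.closure S) :=
  Subgroup.finite_closure_of_conj_mem hSfin (fun s hs ↦ (hrefl s hs).1) hsat

/-- If `S` is a finite saturated set of reflections in `GL(V)`, where `V` is a
finite-dimensional vector space over a number field `k`, then the group generated by
`S` is finite. -/
theorem stmt_11 {k V : Type*} [Field k] [NumberField k] [AddCommGroup V] [Module k V]
    [FiniteDimensional k V]
    (S : Set (V ≃ₗ[k] V)) (hSfin : S.Finite) (hrefl : ∀ s ∈ S, IsReflection s)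
    (hsat : ∀ g ∈ Subgroup.closure S, ∀ s ∈ S, g * s * g⁻¹ ∈ S) :
    Finite (Subgroup.closure S) :=
  stmt_11_general S hSfin hrefl hsat
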